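/- Let K(p,q) = tanh(max{p²,q²}/8)/(max{p²,q²}/4) for (p,q) ≠ (0,0), and K(0,0) = 1/2. Then K is a positive definite kernel on ℝ: for every f ∈ L²(ℝ, ℂ) the double integral ∬_{ℝ×ℝ} K(p,q) f(p) \overline{f(q)} dp dq is absolutely convergent, real, and nonnegative. -/

import Mathlib

/-!
Since `tanh u / u` decreases on `(0, ∞)`, the kernel is `K(p,q) = min (h p) (h q)` with
`h p = K(p,0)` nonnegative and integrable. For `a, b ≥ 0` we have
`min a b = ∫_0^∞ 1[t ≤ a] 1[t ≤ b] dt`, so by Fubini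
`∬ min (h p) (h q) f p (conj f q) = ∫_0^∞ |∫_{h ≥ t} f|² dt ≥ 0`.
Absolute convergence comes from `min a b ≤ √a √b` and `√h |f| ∈ L¹` (Cauchy–Schwarz).
-/

open MeasureTheory Real Filter

/-- The kernel `K(p,q) = tanh(max{p²,q²}/8)/(max{p²,q²}/4)`, with `K(0,0) = 1/2`. -/
noncomputable def Kker (p q : ℝ) : ℝ :=
  if p = 0 ∧ q = 0 then 1 / 2
  else Real.tanh (max (p ^ 2) (q ^ 2) / 8) / (max (p ^ 2) (q ^ 2) / 4)

open Set ComplexConjugate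

namespace Real

lemma hasDerivAt_tanh (x : ℝ) : HasDerivAt tanh (1 / cosh x ^ 2) x := by
  have h := (hasDerivAt_sinh x).div (hasDerivAt_cosh x) (cosh_pos x).ne'
  rw [← sq, ← sq, cosh_sq_sub_sinh_sq] at h
  exact h.congr_of_eventuallyEq (Eventually.of_forall tanh_eq_sinh_div_cosh)

lemma differentiable_tanh : Differentiable ℝ tanh := fun x => (hasDerivAt_tanh x).differentiableAt

lemma continuous_tanh : Continuous tanh := differentiable_tanh.continuous

lemma tanh_nonneg {x : ℝ} (hx : 0 ≤ x) : 0 ≤ tanh x := by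
  rw [tanh_eq_sinh_div_cosh]
  exact div_nonneg (sinh_nonneg_iff.2 hx) (cosh_pos x).le

lemma tanh_le_self {x : ℝ} (hx : 0 ≤ x) : tanh x ≤ x := by
  have hmono : Monotone fun y => y - tanh y := by
    refine monotone_of_deriv_nonneg (differentiable_id.sub differentiable_tanh) fun y => ?_
    have hd : HasDerivAt (fun y => y - tanh y) (1 - 1 / cosh y ^ 2) y :=
      (hasDerivAt_id' y).sub (hasDerivAt_tanh y)
    rw [hd.deriv, sub_nonneg]
    exact div_le_one_of_le₀ (one_le_pow₀ (one_le_cosh y)) (by positivity)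
  simpa using hmono hx

lemma antitoneOn_tanh_div_self : AntitoneOn (fun x => tanh x / x) (Ioi 0) := by
  have hderiv : ∀ x ∈ Ioi (0 : ℝ),
      HasDerivAt (fun x => tanh x / x) ((1 / cosh x ^ 2 * x - tanh x * 1) / x ^ 2) x :=
    fun x hx => (hasDerivAt_tanh x).div (hasDerivAt_id' x) (ne_of_gt hx)
  refine antitoneOn_of_deriv_nonpos (convex_Ioi 0)
    (continuous_tanh.continuousOn.div continuousOn_id fun x hx => ne_of_gt hx) ?_ ?_ <;>
    rw [interior_Ioi]
  · exact fun x hx => (hderiv x hx).differentiableAt.differentiableWithinAt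
  · intro x hx
    rw [(hderiv x hx).deriv]
    refine div_nonpos_of_nonpos_of_nonneg ?_ (sq_nonneg x)
    -- the sign is that of `x - sinh x * cosh x = x - sinh (2 * x) / 2`
    have hsinh : 2 * x ≤ 2 * sinh x * cosh x :=
      sinh_two_mul x ▸ self_le_sinh_iff.2 (by linarith [hx.out])
    rw [tanh_eq_sinh_div_cosh, sub_nonpos, mul_one, div_mul_eq_mul_div, one_mul,
      div_le_div_iff₀ (by positivity) (cosh_pos x)]
    nlinarith [cosh_pos x]

end Real

/-- `kerProfile (p ^ 2)` is the paper's `F_{1,0}(p/2)`. -/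
noncomputable def kerProfile (s : ℝ) : ℝ := if s = 0 then 1 / 2 else tanh (s / 8) / (s / 4)

lemma kerProfile_of_ne_zero {s : ℝ} (hs : s ≠ 0) :
    kerProfile s = tanh (s / 8) / (s / 8) / 2 := by
  rw [kerProfile, if_neg hs]
  field_simp
  ring

lemma antitoneOn_kerProfile : AntitoneOn kerProfile (Ici 0) := by
  intro a ha b hb hab
  rcases (mem_Ici.1 ha).eq_or_lt with rfl | ha
  · rcases (mem_Ici.1 hb).eq_or_lt with rfl | hb
    · rfl
    · rw [kerProfile_of_ne_zero hb.ne', kerProfile, if_pos rfl]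
      have : tanh (b / 8) / (b / 8) ≤ 1 :=
        (div_le_one (by positivity)).2 (tanh_le_self (by positivity))
      linarith
  · rw [kerProfile_of_ne_zero ha.ne', kerProfile_of_ne_zero (ha.trans_le hab).ne']
    exact div_le_div_of_nonneg_right (antitoneOn_tanh_div_self (show 0 < a / 8 by positivity)
      (show 0 < b / 8 by linarith) (by linarith)) zero_le_two

lemma kerProfile_nonneg {s : ℝ} (hs : 0 ≤ s) : 0 ≤ kerProfile s := by
  unfold kerProfile
  split_ifs
  · norm_num
  · exact div_nonneg (tanh_nonneg (by positivity)) (by positivity)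

lemma kerProfile_le {s : ℝ} (hs : 0 ≤ s) : kerProfile s ≤ 5 * (1 + s)⁻¹ := by
  rcases hs.eq_or_lt with rfl | hs
  · norm_num [kerProfile]
  · rw [kerProfile, if_neg hs.ne', ← div_eq_mul_inv,
      div_le_div_iff₀ (by positivity) (by positivity)]
    have h1 := tanh_le_self (show 0 ≤ s / 8 by positivity)
    have h2 := tanh_lt_one (s / 8)
    nlinarith

lemma measurable_kerProfile : Measurable kerProfile :=
  Measurable.ite (measurableSet_singleton 0) measurable_const
    ((continuous_tanh.measurable.comp (measurable_id.div_const 8)).div (measurable_id.div_const 4))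

lemma Kker_eq_kerProfile_max (p q : ℝ) : Kker p q = kerProfile (max (p ^ 2) (q ^ 2)) := by
  have hzero : p = 0 ∧ q = 0 ↔ max (p ^ 2) (q ^ 2) = 0 := by
    rw [max_eq_iff]
    constructor
    · rintro ⟨rfl, rfl⟩; simp
    · rintro (⟨hp, hq⟩ | ⟨hq, hp⟩) <;> constructor <;> nlinarith [sq_nonneg p, sq_nonneg q]
  simp only [Kker, kerProfile, hzero]

lemma Kker_eq_min (p q : ℝ) : Kker p q = min (kerProfile (p ^ 2)) (kerProfile (q ^ 2)) := by
  rw [Kker_eq_kerProfile_max, antitoneOn_kerProfile.map_max (sq_nonneg p) (sq_nonneg q)]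

lemma integrable_kerProfile_sq : Integrable fun p : ℝ => kerProfile (p ^ 2) := by
  refine (integrable_inv_one_add_sq.const_mul 5).mono'
    (measurable_kerProfile.comp (measurable_id.pow_const 2)).aestronglyMeasurable
    (Eventually.of_forall fun p => ?_)
  rw [norm_of_nonneg (kerProfile_nonneg (sq_nonneg p))]
  exact kerProfile_le (sq_nonneg p)

lemma min_le_sqrt_mul_sqrt {a b : ℝ} (ha : 0 ≤ a) (hb : 0 ≤ b) : min a b ≤ √a * √b := by
  rw [← sqrt_mul ha]
  exact le_sqrt_of_sq_le (by
    rw [sq]; exact mul_le_mul (min_le_left a b) (min_le_right a b) (le_min ha hb) ha)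

lemma setIntegral_Ioi_indicator_Iic {E : Type*} [NormedAddCommGroup E] [NormedSpace ℝ E]
    [CompleteSpace E] {m : ℝ} (hm : 0 ≤ m) (c : E) :
    ∫ t in Ioi 0, (Iic m).indicator (fun _ => c) t = m • c := by
  rw [integral_indicator_const c measurableSet_Iic, measureReal_restrict_apply measurableSet_Iic,
    Iic_inter_Ioi, volume_real_Ioc_of_le hm, sub_zero]

lemma integrableOn_Ioi_indicator_Iic {E : Type*} [NormedAddCommGroup E] (m : ℝ) (c : E) :
    IntegrableOn ((Iic m).indicator fun _ => c) (Ioi 0) := by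
  rw [IntegrableOn, integrable_indicator_iff measurableSet_Iic, IntegrableOn,
    Measure.restrict_restrict measurableSet_Iic, Iic_inter_Ioi]
  exact integrableOn_const measure_Ioc_lt_top.ne

section MinKernel

variable {α : Type*} [MeasurableSpace α] {μ : Measure α} {h : α → ℝ} {f : α → ℂ}

lemma integrable_sqrt_mul_norm (hi : Integrable h μ) (h0 : 0 ≤ h) (hf : MemLp f 2 μ) :
    Integrable (fun x => √(h x) * ‖f x‖) μ := by
  have hsqrt : MemLp (fun x => √(h x)) 2 μ := by
    rw [memLp_two_iff_integrable_sq (continuous_sqrt.comp_aestronglyMeasurable hi.1)]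
    exact hi.congr (Eventually.of_forall fun x => (sq_sqrt (h0 x)).symm)
  exact hsqrt.integrable_mul hf.norm

lemma integrable_min_mul_conj (hm : Measurable h) (h0 : 0 ≤ h) (hi : Integrable h μ)
    (hf : MemLp f 2 μ) :
    Integrable (fun z : α × α => ((min (h z.1) (h z.2) : ℝ) : ℂ) * f z.1 * conj (f z.2))
      (μ.prod μ) := by
  have hu := integrable_sqrt_mul_norm hi h0 hf
  refine (hu.mul_prod hu).mono' ?_ (Eventually.of_forall fun z => ?_)
  · exact ((Complex.measurable_ofReal.comp ((hm.comp measurable_fst).min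
      (hm.comp measurable_snd))).aestronglyMeasurable.mul hf.1.comp_fst).mul
      (Complex.continuous_conj.comp_aestronglyMeasurable hf.1.comp_snd)
  · rw [norm_mul, norm_mul, Complex.norm_real, norm_of_nonneg (le_min (h0 _) (h0 _)),
      Complex.norm_conj]
    calc min (h z.1) (h z.2) * ‖f z.1‖ * ‖f z.2‖
        ≤ √(h z.1) * √(h z.2) * ‖f z.1‖ * ‖f z.2‖ := by
          gcongr; exact min_le_sqrt_mul_sqrt (h0 _) (h0 _)
      _ = √(h z.1) * ‖f z.1‖ * (√(h z.2) * ‖f z.2‖) := by ring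

variable [SFinite μ]

lemma integral_indicator_prod_mul_conj {s : Set α} (hs : MeasurableSet s) :
    ∫ z, (s ×ˢ s).indicator (fun z : α × α => f z.1 * conj (f z.2)) z ∂(μ.prod μ)
      = ((‖∫ x in s, f x ∂μ‖ ^ 2 : ℝ) : ℂ) := by
  rw [integral_indicator (hs.prod hs), ← Measure.prod_restrict,
    integral_prod_mul f fun y => conj (f y), integral_conj, Complex.mul_conj']
  push_cast
  rfl

theorem integral_min_mul_conj_eq (hm : Measurable h) (h0 : 0 ≤ h) (hi : Integrable h μ)
    (hf : MemLp f 2 μ) :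
    ∫ z, ((min (h z.1) (h z.2) : ℝ) : ℂ) * f z.1 * conj (f z.2) ∂(μ.prod μ)
      = ((∫ t in Ioi 0, ‖∫ x in {x | t ≤ h x}, f x ∂μ‖ ^ 2 : ℝ) : ℂ) := by
  set g : α × α → ℂ := fun z => f z.1 * conj (f z.2)
  set Φ : (α × α) × ℝ → ℂ := {w | w.2 ≤ min (h w.1.1) (h w.1.2)}.indicator fun w => g w.1
  have hΦ_section : ∀ z t, Φ (z, t) = (Iic (min (h z.1) (h z.2))).indicator (fun _ => g z) t :=
    fun _ _ => rfl
  have hΦ_fiber : ∀ t, (fun z => Φ (z, t)) = ({x | t ≤ h x} ×ˢ {x | t ≤ h x}).indicator g := by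
    intro t
    ext z
    simp only [Φ, indicator_apply, mem_ofPred_eq, mem_prod, le_min_iff]
  have hΦ : Integrable Φ ((μ.prod μ).prod (volume.restrict (Ioi 0))) := by
    refine (integrable_prod_iff ?_).2 ⟨Eventually.of_forall fun z => ?_, ?_⟩
    · exact (hf.1.comp_fst.mul (Complex.continuous_conj.comp_aestronglyMeasurable
        hf.1.comp_snd)).comp_fst.indicator (measurableSet_le measurable_snd
        ((hm.comp (measurable_fst.comp measurable_fst)).min
          (hm.comp (measurable_snd.comp measurable_fst))))
    · simp only [hΦ_section]; exact integrableOn_Ioi_indicator_Iic _ _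
    · refine (integrable_min_mul_conj hm h0 hi hf).norm.congr (Eventually.of_forall fun z => ?_)
      simp only [hΦ_section, norm_indicator_eq_indicator_norm]
      rw [setIntegral_Ioi_indicator_Iic (le_min (h0 _) (h0 _)), smul_eq_mul, mul_assoc, norm_mul,
        Complex.norm_real, norm_of_nonneg (le_min (h0 _) (h0 _))]
  calc ∫ z, ((min (h z.1) (h z.2) : ℝ) : ℂ) * f z.1 * conj (f z.2) ∂(μ.prod μ)
      = ∫ z, (∫ t in Ioi 0, Φ (z, t)) ∂(μ.prod μ) := by
        congr 1
        funext z
        simp only [hΦ_section]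
        rw [setIntegral_Ioi_indicator_Iic (le_min (h0 _) (h0 _)), Complex.real_smul,
          mul_assoc]
    _ = ∫ t in Ioi 0, ∫ z, Φ (z, t) ∂(μ.prod μ) :=
        integral_integral_swap (f := fun z t => Φ (z, t)) hΦ
    _ = ∫ t in Ioi 0, ((‖∫ x in {x | t ≤ h x}, f x ∂μ‖ ^ 2 : ℝ) : ℂ) := by
        congr 1
        funext t
        rw [hΦ_fiber, integral_indicator_prod_mul_conj (measurableSet_le measurable_const hm)]
    _ = _ := integral_ofReal

end MinKernel

theorem Kker_posdef (f : Lp ℂ 2 (volume : Measure ℝ)) :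
    Integrable (fun x : ℝ × ℝ =>
        (Kker x.1 x.2 : ℂ) * f x.1 * (starRingEnd ℂ) (f x.2)) (volume : Measure (ℝ × ℝ)) ∧
    (∫ x : ℝ × ℝ, (Kker x.1 x.2 : ℂ) * f x.1 * (starRingEnd ℂ) (f x.2)).im = 0 ∧
    0 ≤ (∫ x : ℝ × ℝ, (Kker x.1 x.2 : ℂ) * f x.1 * (starRingEnd ℂ) (f x.2)).re := by
  have hm : Measurable fun p : ℝ => kerProfile (p ^ 2) :=
    measurable_kerProfile.comp (measurable_id.pow_const 2)
  have h0 : 0 ≤ fun p : ℝ => kerProfile (p ^ 2) := fun p => kerProfile_nonneg (sq_nonneg p)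
  have hK : (fun x : ℝ × ℝ => (Kker x.1 x.2 : ℂ) * f x.1 * conj (f x.2)) = fun x =>
      ((min (kerProfile (x.1 ^ 2)) (kerProfile (x.2 ^ 2)) : ℝ) : ℂ) * f x.1 * conj (f x.2) := by
    funext x
    rw [Kker_eq_min]
  have hint := integrable_min_mul_conj hm h0 integrable_kerProfile_sq (Lp.memLp f)
  rw [Measure.volume_eq_prod, hK,
    integral_min_mul_conj_eq hm h0 integrable_kerProfile_sq (Lp.memLp f)]
  exact ⟨hint, Complex.ofReal_im _, integral_nonneg fun _ => sq_nonneg _⟩
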